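/- arXiv:1211.6059 — 6 statements merged into one kernel-verified Lean document; each statement's English description precedes it below -/
import Mathlib

section
/- Let θ > 0, let h ∈ C¹([0, ∞)) satisfy h(0) = 0 and h' > 0 on [0, ∞) (so h is strictly increasing), and let S : [0, ∞) → (0, ∞) be non-increasing with S(0) = 1. Fix a > 0 and define w(t) = (θ+1)·h'(t) for t ≤ a, and w(t) = (θ+1)·h'(t)·S((h(t) − h(a))/h(a)) for t ≥ a. Then for every ρ ≥ a one has ∫₀^ρ h(s)^θ · w(s) ds ≥ h(ρ)^{θ+1} · S((h(ρ) − h(a))/h(a)). -/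
/-!
Put `φ = (θ+1) h^θ h' = (h^(θ+1))'` and `G s = S (max ((h s - h a) / h a) 0)`. Since `S 0 = 1`,
the integrand is `φ · G` on all of `[0, ρ]`, and `G` is antitone there because `h` is monotone.
As `φ ≥ 0`, the integral is at least `G ρ · ∫₀^ρ φ = S ((h ρ - h a) / h a) · h ρ ^ (θ+1)`.
-/

open Set MeasureTheory intervalIntegral

theorem IntervalIntegrable.mul_antitoneOn {f g : ℝ → ℝ} {a b : ℝ} (hab : a ≤ b)
    (hf : IntervalIntegrable f volume a b) (hg : AntitoneOn g (Icc a b)) :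
    IntervalIntegrable (fun x => f x * g x) volume a b := by
  rw [intervalIntegrable_iff_integrableOn_Ioc_of_le hab] at hf ⊢
  refine hf.mul_bdd (c := max |g b| |g a|) ?_ ?_
  · exact ((hg.integrableOn_isCompact isCompact_Icc).mono_set Ioc_subset_Icc_self).1
  · refine ae_restrict_of_forall_mem measurableSet_Ioc fun x hx => ?_
    have hx' : x ∈ Icc a b := Ioc_subset_Icc_self hx
    exact abs_le_max_abs_abs (hg hx' (right_mem_Icc.2 hab) hx'.2) (hg (left_mem_Icc.2 hab) hx' hx'.1)

theorem mul_integral_le_integral_mul_of_antitoneOn {f g : ℝ → ℝ} {a b : ℝ} (hab : a ≤ b)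
    (hf : IntervalIntegrable f volume a b) (hf₀ : ∀ x ∈ Icc a b, 0 ≤ f x)
    (hg : AntitoneOn g (Icc a b)) :
    g b * ∫ x in a..b, f x ≤ ∫ x in a..b, f x * g x := by
  rw [← intervalIntegral.integral_const_mul]
  refine integral_mono_on hab (hf.const_mul _) (hf.mul_antitoneOn hab hg) fun x hx => ?_
  rw [mul_comm]
  exact mul_le_mul_of_nonneg_left (hg hx (right_mem_Icc.2 hab) hx.2) (hf₀ x hx)

theorem HasDerivAt.rpow_add_one {h : ℝ → ℝ} {h' θ x : ℝ} (hh : HasDerivAt h h' x) (hθ : 0 ≤ θ) :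
    HasDerivAt (fun s => h s ^ (θ + 1)) ((θ + 1) * h x ^ θ * h') x := by
  convert hh.rpow_const (p := θ + 1) (Or.inr (by linarith)) using 1
  rw [add_sub_cancel_right]
  ring

theorem antitoneOn_comp_max_zero {S u : ℝ → ℝ} {s : Set ℝ}
    (hS : ∀ x y : ℝ, 0 ≤ x → x ≤ y → S y ≤ S x) (hu : MonotoneOn u s) :
    AntitoneOn (fun x => S (max (u x) 0)) s := fun _ hx _ hy hxy =>
  hS _ _ (le_max_right _ _) (max_le_max (hu hx hy hxy) le_rfl)

section

variable {h h' : ℝ → ℝ}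

theorem monotoneOn_Ici_of_hasDerivWithinAt_nonneg
    (hderiv : ∀ t ∈ Ici (0:ℝ), HasDerivWithinAt h (h' t) (Ici 0) t)
    (hpos : ∀ t ∈ Ici (0:ℝ), 0 ≤ h' t) : MonotoneOn h (Ici 0) :=
  monotoneOn_of_hasDerivWithinAt_nonneg (convex_Ici 0)
    (fun t ht => (hderiv t ht).continuousWithinAt)
    (fun t ht => (hderiv t (interior_subset ht)).mono interior_subset)
    fun t ht => hpos t (interior_subset ht)

variable {θ ρ : ℝ}

theorem continuousOn_rpow_add_one (hθ : 0 ≤ θ)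
    (hderiv : ∀ t ∈ Ici (0:ℝ), HasDerivWithinAt h (h' t) (Ici 0) t) :
    ContinuousOn (fun s => h s ^ (θ + 1)) (Ici 0) :=
  ContinuousOn.rpow_const (fun t ht => (hderiv t ht).continuousWithinAt)
    fun _ _ => Or.inr (by linarith)

theorem hasDerivAt_rpow_add_one_of_pos (hθ : 0 ≤ θ)
    (hderiv : ∀ t ∈ Ici (0:ℝ), HasDerivWithinAt h (h' t) (Ici 0) t) {x : ℝ} (hx : 0 < x) :
    HasDerivAt (fun s => h s ^ (θ + 1)) ((θ + 1) * h x ^ θ * h' x) x :=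
  ((hderiv x hx.le).hasDerivAt (Ici_mem_nhds hx)).rpow_add_one hθ

theorem rpow_mul_deriv_nonneg (hθ : 0 ≤ θ)
    (hderiv : ∀ t ∈ Ici (0:ℝ), HasDerivWithinAt h (h' t) (Ici 0) t)
    (hpos : ∀ t ∈ Ici (0:ℝ), 0 ≤ h' t) (h0 : h 0 = 0) {x : ℝ} (hx : 0 ≤ x) :
    0 ≤ (θ + 1) * h x ^ θ * h' x := by
  have hx₀ : 0 ≤ h x :=
    h0 ▸ monotoneOn_Ici_of_hasDerivWithinAt_nonneg hderiv hpos self_mem_Ici hx hx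
  exact mul_nonneg (mul_nonneg (by linarith) (Real.rpow_nonneg hx₀ θ)) (hpos x hx)

theorem intervalIntegrable_rpow_mul_deriv (hθ : 0 ≤ θ) (hρ : 0 ≤ ρ)
    (hderiv : ∀ t ∈ Ici (0:ℝ), HasDerivWithinAt h (h' t) (Ici 0) t)
    (hpos : ∀ t ∈ Ici (0:ℝ), 0 ≤ h' t) (h0 : h 0 = 0) :
    IntervalIntegrable (fun s => (θ + 1) * h s ^ θ * h' s) volume 0 ρ := by
  refine intervalIntegrable_deriv_of_nonneg (g := fun s => h s ^ (θ + 1)) ?_ ?_ ?_ <;>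
    simp only [uIcc_of_le hρ, min_eq_left hρ, max_eq_right hρ]
  · exact (continuousOn_rpow_add_one hθ hderiv).mono Icc_subset_Ici_self
  · exact fun x hx => hasDerivAt_rpow_add_one_of_pos hθ hderiv hx.1
  · exact fun x hx => rpow_mul_deriv_nonneg hθ hderiv hpos h0 hx.1.le

theorem integral_rpow_mul_deriv (hθ : 0 ≤ θ) (hρ : 0 ≤ ρ)
    (hderiv : ∀ t ∈ Ici (0:ℝ), HasDerivWithinAt h (h' t) (Ici 0) t)
    (hpos : ∀ t ∈ Ici (0:ℝ), 0 ≤ h' t) (h0 : h 0 = 0) :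
    ∫ s in (0:ℝ)..ρ, (θ + 1) * h s ^ θ * h' s = h ρ ^ (θ + 1) := by
  rw [integral_eq_sub_of_hasDerivAt_of_le hρ
    ((continuousOn_rpow_add_one hθ hderiv).mono Icc_subset_Ici_self)
    (fun x hx => hasDerivAt_rpow_add_one_of_pos hθ hderiv hx.1)
    (intervalIntegrable_rpow_mul_deriv hθ hρ hderiv hpos h0), h0,
    Real.zero_rpow (by linarith), sub_zero]

end

theorem rpow_mul_weight_eq {θ a s : ℝ} {h h' S w : ℝ → ℝ} (hmono : MonotoneOn h (Ici 0))
    (ha : 0 ≤ a) (hha : 0 ≤ h a) (hS0 : S 0 = 1)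
    (hw1 : ∀ t, 0 ≤ t → t ≤ a → w t = (θ + 1) * h' t)
    (hw2 : ∀ t, a ≤ t → w t = (θ + 1) * h' t * S ((h t - h a) / h a)) (hs : 0 ≤ s) :
    h s ^ θ * w s = (θ + 1) * h s ^ θ * h' s * S (max ((h s - h a) / h a) 0) := by
  rcases le_total s a with hsa | has
  · have : (h s - h a) / h a ≤ 0 :=
      div_nonpos_of_nonpos_of_nonneg (sub_nonpos.2 (hmono hs ha hsa)) hha
    rw [hw1 s hs hsa, max_eq_right this, hS0]
    ring
  · have : 0 ≤ (h s - h a) / h a := div_nonneg (sub_nonneg.2 (hmono ha hs has)) hha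
    rw [hw2 s has, max_eq_left this]
    ring

theorem stmt3_general (θ : ℝ) (hθ : 0 < θ) (h h' S : ℝ → ℝ)
    (hderiv : ∀ t ∈ Set.Ici (0:ℝ), HasDerivWithinAt h (h' t) (Set.Ici 0) t)
    (h0 : h 0 = 0)
    (hpos : ∀ t ∈ Set.Ici (0:ℝ), 0 < h' t)
    (hSmono : ∀ s t : ℝ, 0 ≤ s → s ≤ t → S t ≤ S s)
    (hS0 : S 0 = 1)
    (a : ℝ) (ha : 0 < a)
    (w : ℝ → ℝ)
    (hw1 : ∀ t, 0 ≤ t → t ≤ a → w t = (θ + 1) * h' t)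
    (hw2 : ∀ t, a ≤ t → w t = (θ + 1) * h' t * S ((h t - h a) / h a))
    (ρ : ℝ) (hρ : a ≤ ρ) :
    h ρ ^ (θ + 1) * S ((h ρ - h a) / h a) ≤ ∫ s in (0:ℝ)..ρ, h s ^ θ * w s := by
  have hρ₀ : 0 ≤ ρ := ha.le.trans hρ
  have hpos' : ∀ t ∈ Ici (0:ℝ), 0 ≤ h' t := fun t ht => (hpos t ht).le
  have hmono := monotoneOn_Ici_of_hasDerivWithinAt_nonneg hderiv hpos'
  have hha : 0 ≤ h a := h0 ▸ hmono self_mem_Ici ha.le ha.le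
  set G : ℝ → ℝ := fun s => S (max ((h s - h a) / h a) 0)
  have hG : AntitoneOn G (Icc 0 ρ) := antitoneOn_comp_max_zero hSmono fun x hx y hy hxy =>
    div_le_div_of_nonneg_right (sub_le_sub_right (hmono hx.1 hy.1 hxy) _) hha
  have hGρ : G ρ = S ((h ρ - h a) / h a) := by
    simp only [G, max_eq_left (div_nonneg (sub_nonneg.2 (hmono ha.le hρ₀ hρ)) hha)]
  calc h ρ ^ (θ + 1) * S ((h ρ - h a) / h a)
      = G ρ * ∫ s in (0:ℝ)..ρ, (θ + 1) * h s ^ θ * h' s := by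
        rw [hGρ, integral_rpow_mul_deriv hθ.le hρ₀ hderiv hpos' h0, mul_comm]
    _ ≤ ∫ s in (0:ℝ)..ρ, (θ + 1) * h s ^ θ * h' s * G s :=
        mul_integral_le_integral_mul_of_antitoneOn hρ₀
          (intervalIntegrable_rpow_mul_deriv hθ.le hρ₀ hderiv hpos' h0)
          (fun t ht => rpow_mul_deriv_nonneg hθ.le hderiv hpos' h0 ht.1) hG
    _ = ∫ s in (0:ℝ)..ρ, h s ^ θ * w s := (integral_congr fun s hs =>
        rpow_mul_weight_eq hmono ha.le hha hS0 hw1 hw2 (uIcc_of_le hρ₀ ▸ hs).1).symm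

theorem stmt3 (θ : ℝ) (hθ : 0 < θ) (h h' S : ℝ → ℝ)
    (hderiv : ∀ t ∈ Set.Ici (0:ℝ), HasDerivWithinAt h (h' t) (Set.Ici 0) t)
    (hcont : ContinuousOn h' (Set.Ici 0))
    (h0 : h 0 = 0)
    (hpos : ∀ t ∈ Set.Ici (0:ℝ), 0 < h' t)
    (hSpos : ∀ t ∈ Set.Ici (0:ℝ), 0 < S t)
    (hSmono : ∀ s t : ℝ, 0 ≤ s → s ≤ t → S t ≤ S s)
    (hS0 : S 0 = 1)
    (a : ℝ) (ha : 0 < a)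
    (w : ℝ → ℝ)
    (hw1 : ∀ t, 0 ≤ t → t ≤ a → w t = (θ + 1) * h' t)
    (hw2 : ∀ t, a ≤ t → w t = (θ + 1) * h' t * S ((h t - h a) / h a))
    (ρ : ℝ) (hρ : a ≤ ρ) :
    h ρ ^ (θ + 1) * S ((h ρ - h a) / h a) ≤ ∫ s in (0:ℝ)..ρ, h s ^ θ * w s :=
  stmt3_general θ hθ h h' S hderiv h0 hpos hSmono hS0 a ha w hw1 hw2 ρ hρ
end

section
/- Let θ > 1 and R > 0, let h : (0, R] → (0, ∞) be continuous, and suppose there exist constants K > 0 and δ₀ ∈ (0, R] such that |h(s) − s| ≤ K·s² for all s ∈ (0, δ₀]. Then lim_{a → 0⁺} a^{θ−1} · ∫_a^R h(s)^{−θ} ds = 1/(θ − 1). -/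
open Filter Topology Set Asymptotics MeasureTheory

/-!
Since `h s = s + O(s²)`, `h s ^ (-θ)` is asymptotically equivalent to `s ^ (-θ)` as `s → 0⁺`.
The model integral is explicit:
`a ^ (θ - 1) * ∫ s in a..R, s ^ (-θ) = (1 - (a / R) ^ (θ - 1)) / (θ - 1)`.
The error `h s ^ (-θ) - s ^ (-θ)` is `o(s ^ (-θ))`; splitting its integral at a small `δ`, the
part over `[a, δ]` is at most a small multiple of `∫ s in a..δ, s ^ (-θ) ≤ a ^ (1 - θ) / (θ - 1)`
(here `θ > 1` is used), and the part over `[δ, R]` is a constant, so the error integral is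
`o(a ^ (1 - θ))`.
-/

lemma tendsto_rpow_nhdsGT_zero_of_pos {p : ℝ} (hp : 0 < p) :
    Tendsto (fun a : ℝ => a ^ p) (𝓝[>] 0) (𝓝 0) := by
  simpa [Real.zero_rpow hp.ne'] using
    (Real.continuousAt_rpow_const 0 p (Or.inr hp.le)).tendsto.mono_left nhdsWithin_le_nhds

lemma ContinuousOn.intervalIntegrable_of_Ioc {f : ℝ → ℝ} {R a b : ℝ}
    (hf : ContinuousOn f (Ioc 0 R)) (ha : 0 < a) (hab : a ≤ b) (hbR : b ≤ R) :
    IntervalIntegrable f volume a b := by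
  refine (hf.mono ?_).intervalIntegrable
  rw [uIcc_of_le hab]
  exact fun x hx => ⟨ha.trans_le hx.1, hx.2.trans hbR⟩

lemma rpow_mul_integral_rpow_neg {θ a b : ℝ} (hθ : θ ≠ 1) (ha : 0 < a) (hb : 0 < b) :
    a ^ (θ - 1) * ∫ s in a..b, s ^ (-θ) = (1 - (a / b) ^ (θ - 1)) / (θ - 1) := by
  have hθ' : θ - 1 ≠ 0 := sub_ne_zero.2 hθ
  have h0 : (0 : ℝ) ∉ uIcc a b := fun h0 => by
    rcases le_total a b with hab | hab
    · exact ha.not_ge (uIcc_of_le hab ▸ h0).1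
    · exact hb.not_ge (uIcc_of_ge hab ▸ h0).1
  rw [integral_rpow (Or.inr ⟨by contrapose! hθ; linarith, h0⟩), Real.div_rpow ha.le hb.le,
    show -θ + 1 = -(θ - 1) by ring, Real.rpow_neg ha.le, Real.rpow_neg hb.le]
  have : a ^ (θ - 1) ≠ 0 := (Real.rpow_pos_of_pos ha _).ne'
  field_simp
  ring

lemma tendsto_rpow_mul_integral_rpow_neg {θ R : ℝ} (hθ : 1 < θ) (hR : 0 < R) :
    Tendsto (fun a => a ^ (θ - 1) * ∫ s in a..R, s ^ (-θ)) (𝓝[>] 0) (𝓝 (1 / (θ - 1))) := by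
  have hlim : Tendsto (fun a : ℝ => (1 - (a / R) ^ (θ - 1)) / (θ - 1)) (𝓝[>] 0)
      (𝓝 ((1 - 0 / R ^ (θ - 1)) / (θ - 1))) := by
    refine (((tendsto_rpow_nhdsGT_zero_of_pos (sub_pos.2 hθ)).div_const _).const_sub 1
      |>.div_const _).congr' ?_
    filter_upwards [self_mem_nhdsWithin] with a ha
    rw [Real.div_rpow ha.le hR.le]
  rw [zero_div, sub_zero] at hlim
  refine hlim.congr' ?_
  filter_upwards [self_mem_nhdsWithin] with a ha
  rw [rpow_mul_integral_rpow_neg hθ.ne' ha hR]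

lemma isEquivalent_id_of_abs_sub_le_sq {h : ℝ → ℝ} {K δ₀ : ℝ} (hδ₀ : 0 < δ₀)
    (happrox : ∀ s ∈ Ioc 0 δ₀, |h s - s| ≤ K * s ^ 2) : h ~[𝓝[>] 0] id := by
  have hO : (h - id) =O[𝓝[>] 0] fun s => s ^ 2 := by
    refine IsBigO.of_bound K ?_
    filter_upwards [Ioc_mem_nhdsGT hδ₀] with s hs
    simpa [abs_of_nonneg (sq_nonneg s)] using happrox s hs
  exact hO.trans_isLittleO ((isLittleO_pow_id one_lt_two).mono nhdsWithin_le_nhds)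

lemma isLittleO_rpow_neg_sub_rpow_neg {h : ℝ → ℝ} (hh : h ~[𝓝[>] 0] id) (θ : ℝ) :
    (fun s => h s ^ (-θ) - s ^ (-θ)) =o[𝓝[>] 0] fun s => s ^ (-θ) := by
  have habs : (id : ℝ → ℝ) =ᶠ[𝓝[>] 0] fun s => |s| := by
    filter_upwards [self_mem_nhdsWithin] with s hs
    exact (abs_of_pos hs).symm
  have := (hh.congr_right habs).rpow (fun s => abs_nonneg s) (r := -θ)
  have hv : (fun s => |s|) ^ (-θ) =ᶠ[𝓝[>] 0] fun s : ℝ => s ^ (-θ) := by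
    filter_upwards [self_mem_nhdsWithin] with s hs
    simp [abs_of_pos (show (0:ℝ) < s from hs)]
  exact (this.congr_right hv).isLittleO

lemma tendsto_rpow_mul_integral_of_isLittleO {θ R : ℝ} (hθ : 1 < θ) (hR : 0 < R) {r : ℝ → ℝ}
    (hr : ContinuousOn r (Ioc 0 R)) (ho : r =o[𝓝[>] 0] fun s => s ^ (-θ)) :
    Tendsto (fun a => a ^ (θ - 1) * ∫ s in a..R, r s) (𝓝[>] 0) (𝓝 0) := by
  have hθ1 : 0 < θ - 1 := sub_pos.2 hθ
  rw [Metric.tendsto_nhds]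
  intro ε hε
  obtain ⟨δ, hδ, hbound⟩ := mem_nhdsGT_iff_exists_Ioc_subset.1
    (ho.bound (show 0 < (θ - 1) * (ε / 2) by positivity))
  set δ' := min δ R
  have hδ' : 0 < δ' := lt_min hδ hR
  have hδ'R : δ' ≤ R := min_le_right δ R
  have hnear : ∀ a ∈ Ioo 0 δ', a ^ (θ - 1) * ‖∫ s in a..δ', r s‖ ≤ ε / 2 := by
    intro a ⟨ha, haδ⟩
    have hint : IntervalIntegrable (fun s => (θ - 1) * (ε / 2) * s ^ (-θ)) volume a δ' :=
      (ContinuousOn.intervalIntegrable_of_Ioc (R := δ')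
        (continuousOn_const.mul (continuousOn_id.rpow_const fun s hs => Or.inl hs.1.ne'))
        ha haδ.le le_rfl)
    have hle : ‖∫ s in a..δ', r s‖ ≤ ∫ s in a..δ', (θ - 1) * (ε / 2) * s ^ (-θ) := by
      refine intervalIntegral.norm_integral_le_of_norm_le haδ.le (ae_of_all _ fun s hs => ?_) hint
      have hs0 : 0 < s := ha.trans hs.1
      simpa [abs_of_pos (Real.rpow_pos_of_pos hs0 _)] using
        hbound ⟨hs0, hs.2.trans (min_le_left δ R)⟩
    calc a ^ (θ - 1) * ‖∫ s in a..δ', r s‖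
        ≤ a ^ (θ - 1) * ∫ s in a..δ', (θ - 1) * (ε / 2) * s ^ (-θ) :=
          mul_le_mul_of_nonneg_left hle (Real.rpow_nonneg ha.le _)
      _ = ε / 2 * (1 - (a / δ') ^ (θ - 1)) := by
          rw [intervalIntegral.integral_const_mul, mul_left_comm,
            rpow_mul_integral_rpow_neg hθ.ne' ha hδ']
          field_simp
      _ ≤ ε / 2 := by
          have := Real.rpow_nonneg (div_pos ha hδ').le (θ - 1)
          nlinarith
  have hfar : ∀ᶠ a in 𝓝[>] 0, a ^ (θ - 1) * ‖∫ s in δ'..R, r s‖ < ε / 2 :=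
    ((tendsto_rpow_nhdsGT_zero_of_pos hθ1).mul_const _).eventually_lt_const
      (by simpa using half_pos hε)
  filter_upwards [hfar, Ioo_mem_nhdsGT hδ'] with a hfar ha
  have hpow : 0 < a ^ (θ - 1) := Real.rpow_pos_of_pos ha.1 _
  rw [← intervalIntegral.integral_add_adjacent_intervals
    (hr.intervalIntegrable_of_Ioc ha.1 ha.2.le hδ'R) (hr.intervalIntegrable_of_Ioc hδ' hδ'R le_rfl)]
  calc dist (a ^ (θ - 1) * ((∫ s in a..δ', r s) + ∫ s in δ'..R, r s)) 0
      ≤ a ^ (θ - 1) * ‖∫ s in a..δ', r s‖ + a ^ (θ - 1) * ‖∫ s in δ'..R, r s‖ := by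
        rw [dist_zero_right, norm_mul, Real.norm_of_nonneg hpow.le, ← mul_add]
        exact mul_le_mul_of_nonneg_left (norm_add_le _ _) hpow.le
    _ < ε := by linarith [hnear a ha]

theorem stmt7_general (θ R : ℝ) (hθ : 1 < θ) (hR : 0 < R) (h : ℝ → ℝ)
    (hcont : ContinuousOn h (Set.Ioc 0 R))
    (hpos : ∀ s ∈ Set.Ioc (0:ℝ) R, 0 < h s)
    (K δ₀ : ℝ) (hδ₀ : 0 < δ₀)
    (happrox : ∀ s ∈ Set.Ioc (0:ℝ) δ₀, |h s - s| ≤ K * s ^ 2) :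
    Tendsto (fun a : ℝ => a ^ (θ - 1) * ∫ s in a..R, (h s) ^ (-θ))
      (nhdsWithin 0 (Set.Ioi 0)) (nhds (1 / (θ - 1))) := by
  have hmodel : ContinuousOn (fun s : ℝ => s ^ (-θ)) (Ioc 0 R) :=
    continuousOn_id.rpow_const fun s hs => Or.inl hs.1.ne'
  have hpow : ContinuousOn (fun s => h s ^ (-θ)) (Ioc 0 R) :=
    hcont.rpow_const fun s hs => Or.inl (hpos s hs).ne'
  have herror := tendsto_rpow_mul_integral_of_isLittleO (r := fun s => h s ^ (-θ) - s ^ (-θ))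
    hθ hR (hpow.sub hmodel)
    (isLittleO_rpow_neg_sub_rpow_neg (isEquivalent_id_of_abs_sub_le_sq hδ₀ happrox) θ)
  have hsum := (tendsto_rpow_mul_integral_rpow_neg hθ hR).add herror
  rw [add_zero] at hsum
  refine hsum.congr' ?_
  filter_upwards [Ioo_mem_nhdsGT hR] with a ha
  rw [intervalIntegral.integral_sub (hpow.intervalIntegrable_of_Ioc ha.1 ha.2.le le_rfl)
    (hmodel.intervalIntegrable_of_Ioc ha.1 ha.2.le le_rfl)]
  ring

theorem stmt7 (θ R : ℝ) (hθ : 1 < θ) (hR : 0 < R) (h : ℝ → ℝ)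
    (hcont : ContinuousOn h (Set.Ioc 0 R))
    (hpos : ∀ s ∈ Set.Ioc (0:ℝ) R, 0 < h s)
    (K δ₀ : ℝ) (hK : 0 < K) (hδ₀ : 0 < δ₀) (hδ₀R : δ₀ ≤ R)
    (happrox : ∀ s ∈ Set.Ioc (0:ℝ) δ₀, |h s - s| ≤ K * s ^ 2) :
    Tendsto (fun a : ℝ => a ^ (θ - 1) * ∫ s in a..R, (h s) ^ (-θ))
      (nhdsWithin 0 (Set.Ioi 0)) (nhds (1 / (θ - 1))) :=
  stmt7_general θ R hθ hR h hcont hpos K δ₀ hδ₀ happrox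
end

section
/- Let R > 0, let h : (0, R] → (0, ∞) be continuous, and suppose there exist constants K > 0 and δ₀ ∈ (0, R] such that |h(s) − s| ≤ K·s² for all s ∈ (0, δ₀]. Then lim_{a → 0⁺} (∫_a^R h(s)^{−1} ds) / |log a| = 1. -/
/-!
Where `K s ≤ 1/2`, the estimate `|h s - s| ≤ K s²` gives `h s ≥ s/2` and hence
`|(h s)⁻¹ - s⁻¹| ≤ 2K`. So `∫_a^R h⁻¹ = -log a + O(1)` as `a → 0⁺`, and dividing by
`|log a| → ∞` gives the limit `1`.
-/

open Filter Set Real Asymptotics MeasureTheory Topology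

theorem abs_inv_sub_inv_le_of_abs_sub_le_mul_sq {x s K : ℝ} (hs : 0 < s) (hKs : K * s ≤ 1 / 2)
    (hx : |x - s| ≤ K * s ^ 2) : |x⁻¹ - s⁻¹| ≤ 2 * K := by
  have hx_half : s / 2 ≤ x := by nlinarith [neg_abs_le (x - s)]
  have hx0 : 0 < x := by linarith
  have hK : 0 ≤ K := nonneg_of_mul_nonneg_left ((abs_nonneg _).trans hx) (by positivity)
  rw [inv_sub_inv hx0.ne' hs.ne', abs_div, abs_of_pos (mul_pos hx0 hs), abs_sub_comm,
    div_le_iff₀ (mul_pos hx0 hs)]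
  nlinarith [mul_le_mul_of_nonneg_left hx_half (mul_nonneg hK hs.le)]

theorem abs_integral_inv_sub_log_le {h : ℝ → ℝ} {K a δ : ℝ} (ha : 0 < a) (haδ : a ≤ δ)
    (hK : 0 ≤ K) (hKδ : K * δ ≤ 1 / 2)
    (happrox : ∀ s ∈ Ioc a δ, |h s - s| ≤ K * s ^ 2)
    (hint : IntervalIntegrable (fun s => (h s)⁻¹) volume a δ) :
    |(∫ s in a..δ, (h s)⁻¹) - (log δ - log a)| ≤ 2 * K * (δ - a) := by
  have hinv : IntervalIntegrable (fun s : ℝ => s⁻¹) volume a δ :=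
    intervalIntegral.intervalIntegrable_inv (fun s hs => by
      rw [uIcc_of_le haδ] at hs; exact (ha.trans_le hs.1).ne') continuousOn_id
  rw [← log_div (ha.trans_le haδ).ne' ha.ne', ← integral_inv_of_pos ha (ha.trans_le haδ),
    ← intervalIntegral.integral_sub hint hinv]
  refine (intervalIntegral.norm_integral_le_of_norm_le_const
    (f := fun s => (h s)⁻¹ - s⁻¹) fun s hs => ?_).trans_eq
    (by rw [abs_of_nonneg (sub_nonneg.2 haδ)])
  rw [uIoc_of_le haδ] at hs
  exact abs_inv_sub_inv_le_of_abs_sub_le_mul_sq (ha.trans hs.1)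
    ((mul_le_mul_of_nonneg_left hs.2 hK).trans hKδ) (happrox s hs)

theorem tendsto_div_abs_log_of_add_log_isBigO_one {f : ℝ → ℝ}
    (hf : (fun a => f a + log a) =O[𝓝[>] 0] fun _ => (1 : ℝ)) :
    Tendsto (fun a => f a / |log a|) (𝓝[>] 0) (𝓝 1) := by
  have hlog_neg : ∀ᶠ a in 𝓝[>] 0, log a < 0 := tendsto_log_nhdsGT_zero.eventually_lt_atBot 0
  have habs : Tendsto (fun a => |log a|) (𝓝[>] 0) atTop :=
    tendsto_abs_atBot_atTop.comp tendsto_log_nhdsGT_zero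
  have hone : (fun _ => (1 : ℝ)) =o[𝓝[>] 0] fun a => |log a| :=
    (isLittleO_one_left_iff ℝ).2 (by simpa only [Real.norm_eq_abs, abs_abs] using habs)
  have hequiv : f ~[𝓝[>] 0] fun a => |log a| := by
    refine (hf.trans_isLittleO hone).congr' ?_ EventuallyEq.rfl
    filter_upwards [hlog_neg] with a ha
    rw [Pi.sub_apply, abs_of_neg ha, sub_neg_eq_add]
  exact (isEquivalent_iff_tendsto_one (hlog_neg.mono fun a ha => (abs_pos.2 ha.ne).ne')).1 hequiv

theorem stmt8_general (R : ℝ) (h : ℝ → ℝ)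
    (hcont : ContinuousOn h (Set.Ioc 0 R))
    (hpos : ∀ s ∈ Set.Ioc (0:ℝ) R, 0 < h s)
    (K δ₀ : ℝ) (hK : 0 < K) (hδ₀ : 0 < δ₀) (hδ₀R : δ₀ ≤ R)
    (happrox : ∀ s ∈ Set.Ioc (0:ℝ) δ₀, |h s - s| ≤ K * s ^ 2) :
    Tendsto (fun a : ℝ => (∫ s in a..R, (h s)⁻¹) / |Real.log a|)
      (nhdsWithin 0 (Set.Ioi 0)) (nhds 1) := by
  have hint : ∀ a b, 0 < a → a ≤ b → b ≤ R →
      IntervalIntegrable (fun s => (h s)⁻¹) volume a b := fun a b ha hab hbR =>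
    have hsub : uIcc a b ⊆ Ioc 0 R := by
      rw [uIcc_of_le hab]; exact Icc_subset_Ioc ha hbR
    ((hcont.mono hsub).inv₀ fun s hs => (hpos s (hsub hs)).ne').intervalIntegrable
  obtain ⟨δ, hδ, hδδ₀, hKδ⟩ : ∃ δ, 0 < δ ∧ δ ≤ δ₀ ∧ K * δ ≤ 1 / 2 :=
    ⟨min δ₀ (1 / (2 * K)), by positivity, min_le_left _ _, by
      calc K * min δ₀ (1 / (2 * K)) ≤ K * (1 / (2 * K)) := by gcongr; exact min_le_right _ _
        _ = 1 / 2 := by field_simp⟩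
  have hδR : δ ≤ R := hδδ₀.trans hδ₀R
  refine tendsto_div_abs_log_of_add_log_isBigO_one ((isBigO_one_iff ℝ).2 <|
    isBoundedUnder_of_eventually_le (a := 2 * K * δ + |(∫ s in δ..R, (h s)⁻¹) + log δ|) ?_)
  filter_upwards [Ioo_mem_nhdsGT hδ] with a ha
  have hnear := abs_integral_inv_sub_log_le ha.1 ha.2.le hK.le hKδ
    (fun s hs => happrox s ⟨ha.1.trans hs.1, hs.2.trans hδδ₀⟩) (hint a δ ha.1 ha.2.le hδR)
  rw [← intervalIntegral.integral_add_adjacent_intervals (hint a δ ha.1 ha.2.le hδR)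
    (hint δ R hδ hδR le_rfl), Real.norm_eq_abs]
  calc _ = |((∫ s in a..δ, (h s)⁻¹) - (log δ - log a))
          + ((∫ s in δ..R, (h s)⁻¹) + log δ)| := by congr 1; ring
    _ ≤ _ := (abs_add_le _ _).trans (by gcongr; nlinarith [ha.1])

theorem stmt8 (R : ℝ) (hR : 0 < R) (h : ℝ → ℝ)
    (hcont : ContinuousOn h (Set.Ioc 0 R))
    (hpos : ∀ s ∈ Set.Ioc (0:ℝ) R, 0 < h s)
    (K δ₀ : ℝ) (hK : 0 < K) (hδ₀ : 0 < δ₀) (hδ₀R : δ₀ ≤ R)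
    (happrox : ∀ s ∈ Set.Ioc (0:ℝ) δ₀, |h s - s| ≤ K * s ^ 2) :
    Tendsto (fun a : ℝ => (∫ s in a..R, (h s)⁻¹) / |Real.log a|)
      (nhdsWithin 0 (Set.Ioi 0)) (nhds 1) :=
  stmt8_general R h hcont hpos K δ₀ hK hδ₀ hδ₀R happrox
end

section
/- Let m ≥ 3 be an integer, let h : (0, ∞) → (0, ∞) be continuous and non-decreasing, suppose there exist constants K > 0 and δ₀ > 0 such that |h(s) − s| ≤ K·s² for all s ∈ (0, δ₀], and suppose ∫₁^∞ h(s)^{1−m} ds < ∞. Then lim_{a → 0⁺} a^{−2} · h(a)^m · ∫_a^∞ h(s)^{1−m} ds = 1/(m − 2). -/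
/-!
Substituting the comparison `(1 - Kδ) s ≤ h s ≤ (1 + Kδ) s` on `(0, δ]` into the integral, the
part of `∫_a^∞ h^(1-m)` over `(a, δ]` lies between `(1 ± Kδ)^(1-m) ∫_a^δ s^(1-m)`, and
`a^(m-2) ∫_a^δ s^(1-m) → 1/(m-2)`, while `a^(m-2) ∫_δ^∞ h^(1-m) → 0` by integrability. Letting
first `a → 0` and then `δ → 0` gives `a^(m-2) ∫_a^∞ h^(1-m) → 1/(m-2)`; the remaining factor
`a^(-m) h(a)^m = (h(a)/a)^m` tends to `1`.
-/

open Filter MeasureTheory Topology Set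

theorem tendsto_of_squeeze_family {α ι β : Type*} [TopologicalSpace β] [LinearOrder β]
    [OrderTopology β] {l : Filter α} {l' : Filter ι} [l'.NeBot] {G : α → β} {L U : ι → α → β}
    {lo up : ι → β} {c : β} (hL : ∀ᶠ i in l', Tendsto (L i) l (𝓝 (lo i)))
    (hU : ∀ᶠ i in l', Tendsto (U i) l (𝓝 (up i))) (hlo : Tendsto lo l' (𝓝 c))
    (hup : Tendsto up l' (𝓝 c)) (hLG : ∀ᶠ i in l', ∀ᶠ x in l, L i x ≤ G x)
    (hGU : ∀ᶠ i in l', ∀ᶠ x in l, G x ≤ U i x) : Tendsto G l (𝓝 c) := by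
  refine tendsto_order.2 ⟨fun b hb => ?_, fun b hb => ?_⟩
  · obtain ⟨i, hbi, hLi, hLGi⟩ := ((tendsto_order.1 hlo).1 b hb |>.and (hL.and hLG)).exists
    filter_upwards [(tendsto_order.1 hLi).1 b hbi, hLGi] with x hbL hLG
    exact hbL.trans_le hLG
  · obtain ⟨i, hbi, hUi, hGUi⟩ := ((tendsto_order.1 hup).2 b hb |>.and (hU.and hGU)).exists
    filter_upwards [(tendsto_order.1 hUi).2 b hbi, hGUi] with x hUb hGU
    exact hGU.trans_lt hUb

theorem ContinuousOn.integrableOn_Ioi_of_integrableOn_Ioi {E : Type*} [NormedAddCommGroup E]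
    {f : ℝ → E} {a b c : ℝ} (hf : ContinuousOn f (Ioi c)) (hb : IntegrableOn f (Ioi b))
    (hca : c < a) : IntegrableOn f (Ioi a) :=
  ((hf.mono fun _ hx => hca.trans_le hx.1).integrableOn_Icc.union hb).mono_set fun x hx =>
    (le_or_gt x b).imp (fun hxb => ⟨le_of_lt hx, hxb⟩) id

theorem tendsto_rpow_nhds_zero_of_pos {p : ℝ} (hp : 0 < p) :
    Tendsto (fun x : ℝ => x ^ p) (𝓝 0) (𝓝 0) := by
  simpa [Real.zero_rpow hp.ne'] using (Real.continuousAt_rpow_const 0 p (Or.inr hp.le)).tendsto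

theorem tendsto_one_add_mul_rpow (c p : ℝ) :
    Tendsto (fun x : ℝ => (1 + c * x) ^ p) (𝓝 0) (𝓝 1) := by
  simpa using ((continuous_const.add (continuous_const.mul continuous_id)).tendsto
    (0 : ℝ)).rpow_const (p := p) (Or.inl (by simp)) (f := fun x => 1 + c * x)

theorem mem_Icc_of_abs_sub_le_mul_sq {x s K δ : ℝ} (hK : 0 ≤ K) (hs : 0 < s) (hsδ : s ≤ δ)
    (hx : |x - s| ≤ K * s ^ 2) : x ∈ Icc ((1 - K * δ) * s) ((1 + K * δ) * s) := by
  have hKs : K * s ^ 2 ≤ K * δ * s := by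
    rw [sq, ← mul_assoc, mul_right_comm]
    exact mul_le_mul_of_nonneg_right (mul_le_mul_of_nonneg_left hsδ hK) hs.le
  obtain ⟨hlo, hup⟩ := abs_le.mp hx
  constructor <;> linarith

theorem rpow_mul_setIntegral_Ioc_rpow {a δ m : ℝ} (hm : 2 < m) (ha : 0 < a) (haδ : a ≤ δ) :
    a ^ (m - 2) * ∫ s in Ioc a δ, s ^ (1 - m) = (1 - (a / δ) ^ (m - 2)) / (m - 2) := by
  have h0 : (0 : ℝ) ∉ uIcc a δ := by
    rw [uIcc_of_le haδ]
    exact fun h0 => ha.not_ge h0.1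
  rw [← intervalIntegral.integral_of_le haδ, integral_rpow (Or.inr ⟨by linarith, h0⟩),
    show 1 - m + 1 = -(m - 2) by ring, Real.rpow_neg ha.le, Real.rpow_neg (ha.trans_le haδ).le,
    Real.div_rpow ha.le (ha.trans_le haδ).le]
  have hA : 0 < a ^ (m - 2) := Real.rpow_pos_of_pos ha _
  have hD : 0 < δ ^ (m - 2) := Real.rpow_pos_of_pos (ha.trans_le haδ) _
  have hm2 : m - 2 ≠ 0 := by linarith
  field_simp
  ring

theorem tendsto_rpow_mul_setIntegral_Ioc_rpow {δ m : ℝ} (hm : 2 < m) (hδ : 0 < δ) :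
    Tendsto (fun a => a ^ (m - 2) * ∫ s in Ioc a δ, s ^ (1 - m)) (𝓝[>] 0)
      (𝓝 (1 / (m - 2))) := by
  have hlim : Tendsto (fun a : ℝ => (1 - (a / δ) ^ (m - 2)) / (m - 2)) (𝓝[>] 0)
      (𝓝 (1 / (m - 2))) := by
    have hq : Tendsto (fun a : ℝ => (a / δ) ^ (m - 2)) (𝓝 0) (𝓝 0) :=
      (tendsto_rpow_nhds_zero_of_pos (by linarith)).comp
        (by simpa using (tendsto_id (x := 𝓝 (0 : ℝ))).div_const δ)
    simpa using (((tendsto_const_nhds (x := (1 : ℝ))).sub hq).div_const (m - 2)).mono_left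
      (nhdsWithin_le_nhds (s := Ioi 0))
  refine hlim.congr' ?_
  filter_upwards [Ioo_mem_nhdsGT hδ] with a ha
  exact (rpow_mul_setIntegral_Ioc_rpow hm ha.1 ha.2.le).symm

section

variable {h : ℝ → ℝ} {K δ₀ m : ℝ}

theorem tendsto_div_self_of_abs_sub_le_mul_sq (hK : 0 ≤ K) (hδ₀ : 0 < δ₀)
    (happrox : ∀ s ∈ Ioc 0 δ₀, |h s - s| ≤ K * s ^ 2) :
    Tendsto (fun a => h a / a) (𝓝[>] 0) (𝓝 1) := by
  have hlin : ∀ c : ℝ, Tendsto (fun a => 1 + c * a) (𝓝[>] 0) (𝓝 1) := fun c => by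
    simpa using (tendsto_one_add_mul_rpow c 1).mono_left (nhdsWithin_le_nhds (s := Ioi 0))
  have hnear : ∀ᶠ a in 𝓝[>] (0 : ℝ), h a / a ∈ Icc (1 + -K * a) (1 + K * a) := by
    filter_upwards [Ioc_mem_nhdsGT hδ₀] with a ha
    obtain ⟨hlo, hup⟩ := mem_Icc_of_abs_sub_le_mul_sq hK ha.1 le_rfl (happrox a ha)
    rw [mem_Icc, le_div_iff₀ ha.1, div_le_iff₀ ha.1, neg_mul, ← sub_eq_add_neg]
    exact ⟨hlo, hup⟩
  exact tendsto_of_tendsto_of_tendsto_of_le_of_le' (hlin (-K)) (hlin K)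
    (hnear.mono fun _ ha => ha.1) (hnear.mono fun _ ha => ha.2)

theorem rpow_mem_Icc_of_abs_sub_le_mul_sq (hpos : ∀ s, 0 < s → 0 < h s) (hK : 0 ≤ K)
    (hm : 1 ≤ m) (happrox : ∀ s ∈ Ioc 0 δ₀, |h s - s| ≤ K * s ^ 2) {δ s : ℝ} (hδ : δ ≤ δ₀)
    (hKδ : K * δ < 1) (hs : s ∈ Ioc 0 δ) :
    h s ^ (1 - m) ∈ Icc ((1 + K * δ) ^ (1 - m) * s ^ (1 - m))
      ((1 - K * δ) ^ (1 - m) * s ^ (1 - m)) := by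
  obtain ⟨hlo, hup⟩ :=
    mem_Icc_of_abs_sub_le_mul_sq hK hs.1 hs.2 (happrox s ⟨hs.1, hs.2.trans hδ⟩)
  have hδ : 0 ≤ K * δ := mul_nonneg hK (hs.1.trans_le hs.2).le
  rw [← Real.mul_rpow (by linarith) hs.1.le, ← Real.mul_rpow (by linarith) hs.1.le]
  exact ⟨Real.rpow_le_rpow_of_nonpos (hpos s hs.1) hup (by linarith),
    Real.rpow_le_rpow_of_nonpos (mul_pos (by linarith) hs.1) hlo (by linarith)⟩

theorem setIntegral_Ioc_rpow_mem_Icc (hpos : ∀ s, 0 < s → 0 < h s) (hK : 0 ≤ K)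
    (hm : 1 ≤ m) (happrox : ∀ s ∈ Ioc 0 δ₀, |h s - s| ≤ K * s ^ 2) {a δ : ℝ} (ha : 0 < a)
    (hδ : δ ≤ δ₀) (hKδ : K * δ < 1)
    (hint : IntegrableOn (fun s => h s ^ (1 - m)) (Ioc a δ)) :
    ∫ s in Ioc a δ, h s ^ (1 - m) ∈ Icc ((1 + K * δ) ^ (1 - m) * ∫ s in Ioc a δ, s ^ (1 - m))
      ((1 - K * δ) ^ (1 - m) * ∫ s in Ioc a δ, s ^ (1 - m)) := by
  have hpow : IntegrableOn (fun s : ℝ => s ^ (1 - m)) (Ioc a δ) :=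
    ((continuousOn_id.rpow_const fun s hs => Or.inl (ha.trans_le hs.1).ne').integrableOn_Icc
      ).mono_set Ioc_subset_Icc_self
  have hbound := fun s (hs : s ∈ Ioc a δ) =>
    rpow_mem_Icc_of_abs_sub_le_mul_sq hpos hK hm happrox hδ hKδ ⟨ha.trans hs.1, hs.2⟩
  rw [← integral_const_mul, ← integral_const_mul]
  exact ⟨setIntegral_mono_on (hpow.const_mul _) hint measurableSet_Ioc fun s hs => (hbound s hs).1,
    setIntegral_mono_on hint (hpow.const_mul _) measurableSet_Ioc fun s hs => (hbound s hs).2⟩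

theorem tendsto_rpow_mul_setIntegral_Ioi (hm : 2 < m) (hcont : ContinuousOn h (Ioi 0))
    (hpos : ∀ s, 0 < s → 0 < h s) (hK : 0 ≤ K) (hδ₀ : 0 < δ₀)
    (happrox : ∀ s ∈ Ioc 0 δ₀, |h s - s| ≤ K * s ^ 2)
    (hint : IntegrableOn (fun s => h s ^ (1 - m)) (Ioi 1)) :
    Tendsto (fun a => a ^ (m - 2) * ∫ s in Ioi a, h s ^ (1 - m)) (𝓝[>] 0)
      (𝓝 (1 / (m - 2))) := by
  have hintIoi : ∀ a, 0 < a → IntegrableOn (fun s => h s ^ (1 - m)) (Ioi a) := fun a ha =>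
    (hcont.rpow_const fun s hs => Or.inl (hpos s hs).ne').integrableOn_Ioi_of_integrableOn_Ioi
      hint ha
  set P : ℝ → ℝ → ℝ := fun δ a => a ^ (m - 2) * ∫ s in Ioc a δ, s ^ (1 - m)
  set T : ℝ → ℝ := fun δ => ∫ s in Ioi δ, h s ^ (1 - m)
  have hKδ : ∀ᶠ δ in 𝓝[>] (0 : ℝ), K * δ < 1 :=
    (((continuous_const.mul continuous_id).tendsto' 0 0 (by simp)).eventually
      (gt_mem_nhds one_pos)).filter_mono nhdsWithin_le_nhds
  have hbounds : ∀ᶠ δ in 𝓝[>] (0 : ℝ), ∀ᶠ a in 𝓝[>] (0 : ℝ),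
      (1 + K * δ) ^ (1 - m) * P δ a ≤ a ^ (m - 2) * ∫ s in Ioi a, h s ^ (1 - m) ∧
      a ^ (m - 2) * ∫ s in Ioi a, h s ^ (1 - m) ≤
        (1 - K * δ) ^ (1 - m) * P δ a + a ^ (m - 2) * T δ := by
    filter_upwards [Ioo_mem_nhdsGT hδ₀, hKδ] with δ hδ hKδ
    filter_upwards [Ioo_mem_nhdsGT hδ.1] with a ha
    have hsplit : ∫ s in Ioi a, h s ^ (1 - m) = (∫ s in Ioc a δ, h s ^ (1 - m)) + T δ := by
      rw [← Ioc_union_Ioi_eq_Ioi ha.2.le, setIntegral_union (Ioc_disjoint_Ioi le_rfl)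
        measurableSet_Ioi ((hintIoi a ha.1).mono_set Ioc_subset_Ioi_self) (hintIoi δ hδ.1)]
    obtain ⟨hlo, hup⟩ := setIntegral_Ioc_rpow_mem_Icc hpos hK (by linarith) happrox ha.1 hδ.2.le
      hKδ ((hintIoi a ha.1).mono_set Ioc_subset_Ioi_self)
    have hT : 0 ≤ T δ := setIntegral_nonneg measurableSet_Ioi fun s hs =>
      Real.rpow_nonneg (hpos s (hδ.1.trans hs)).le _
    have hA : 0 < a ^ (m - 2) := Real.rpow_pos_of_pos ha.1 _
    simp only [P, hsplit, mul_add, mul_left_comm _ (a ^ (m - 2))]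
    exact ⟨le_add_of_le_of_nonneg (mul_le_mul_of_nonneg_left hlo hA.le) (by positivity),
      add_le_add_left (mul_le_mul_of_nonneg_left hup hA.le) _⟩
  refine tendsto_of_squeeze_family (l' := 𝓝[>] 0)
    (L := fun δ a => (1 + K * δ) ^ (1 - m) * P δ a)
    (U := fun δ a => (1 - K * δ) ^ (1 - m) * P δ a + a ^ (m - 2) * T δ)
    (lo := fun δ => (1 + K * δ) ^ (1 - m) * (1 / (m - 2)))
    (up := fun δ => (1 - K * δ) ^ (1 - m) * (1 / (m - 2))) ?_ ?_ ?_ ?_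
    (hbounds.mono fun _ hδ => hδ.mono fun _ => And.left)
    (hbounds.mono fun _ hδ => hδ.mono fun _ => And.right)
  · filter_upwards [self_mem_nhdsWithin] with δ hδ
    exact (tendsto_rpow_mul_setIntegral_Ioc_rpow hm hδ).const_mul _
  · filter_upwards [self_mem_nhdsWithin] with δ hδ
    simpa using ((tendsto_rpow_mul_setIntegral_Ioc_rpow hm hδ).const_mul _).add
      (((tendsto_rpow_nhds_zero_of_pos (by linarith)).mono_left nhdsWithin_le_nhds).mul_const _)
  · simpa using ((tendsto_one_add_mul_rpow K (1 - m)).mul_const (1 / (m - 2))).mono_left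
      (nhdsWithin_le_nhds (s := Ioi 0))
  · simpa [sub_eq_add_neg] using ((tendsto_one_add_mul_rpow (-K) (1 - m)).mul_const
      (1 / (m - 2))).mono_left (nhdsWithin_le_nhds (s := Ioi 0))

end

theorem stmt9_general (m : ℕ) (hm : 3 ≤ m) (h : ℝ → ℝ)
    (hcont : ContinuousOn h (Set.Ioi 0))
    (hpos : ∀ s : ℝ, 0 < s → 0 < h s)
    (K δ₀ : ℝ) (hK : 0 < K) (hδ₀ : 0 < δ₀)
    (happrox : ∀ s ∈ Set.Ioc (0:ℝ) δ₀, |h s - s| ≤ K * s ^ 2)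
    (hint : IntegrableOn (fun s : ℝ => (h s) ^ (1 - (m : ℝ))) (Set.Ioi 1)) :
    Tendsto (fun a : ℝ => a ^ (-2 : ℝ) * (h a) ^ (m : ℝ) *
        ∫ s in Set.Ioi a, (h s) ^ (1 - (m : ℝ)))
      (nhdsWithin 0 (Set.Ioi 0)) (nhds (1 / ((m : ℝ) - 2))) := by
  have hm2 : (2 : ℝ) < m := by norm_cast
  have hratio : Tendsto (fun a => (h a / a) ^ (m : ℝ)) (𝓝[>] 0) (𝓝 1) := by
    simpa using (tendsto_div_self_of_abs_sub_le_mul_sq hK.le hδ₀ happrox).rpow_const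
      (p := (m : ℝ)) (Or.inl one_ne_zero)
  have hkey := tendsto_rpow_mul_setIntegral_Ioi hm2 hcont hpos hK.le hδ₀ happrox hint
  have hprod := hratio.mul hkey
  rw [one_mul] at hprod
  refine hprod.congr' ?_
  filter_upwards [self_mem_nhdsWithin] with a (ha : 0 < a)
  rw [Real.div_rpow (hpos a ha).le ha.le, Real.rpow_sub ha, Real.rpow_neg ha.le]
  field_simp

theorem stmt9 (m : ℕ) (hm : 3 ≤ m) (h : ℝ → ℝ)
    (hcont : ContinuousOn h (Set.Ioi 0))
    (hpos : ∀ s : ℝ, 0 < s → 0 < h s)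
    (hmono : ∀ s t : ℝ, 0 < s → s ≤ t → h s ≤ h t)
    (K δ₀ : ℝ) (hK : 0 < K) (hδ₀ : 0 < δ₀)
    (happrox : ∀ s ∈ Set.Ioc (0:ℝ) δ₀, |h s - s| ≤ K * s ^ 2)
    (hint : IntegrableOn (fun s : ℝ => (h s) ^ (1 - (m : ℝ))) (Set.Ioi 1)) :
    Tendsto (fun a : ℝ => a ^ (-2 : ℝ) * (h a) ^ (m : ℝ) *
        ∫ s in Set.Ioi a, (h s) ^ (1 - (m : ℝ)))
      (nhdsWithin 0 (Set.Ioi 0)) (nhds (1 / ((m : ℝ) - 2))) :=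
  stmt9_general m hm h hcont hpos K δ₀ hK hδ₀ happrox hint
end

section
/- Let h : (0, ∞) → (0, ∞) be continuous and non-decreasing, suppose there exist constants K > 0 and δ₀ > 0 such that |h(s) − s| ≤ K·s² for all s ∈ (0, δ₀], and suppose ∫₁^∞ h(s)^{−1} ds < ∞. Then lim_{a → 0⁺} (h(a)² · ∫_a^∞ h(s)^{−1} ds) / (a² · |log a|) = 1. -/
/-!
Since `h s = s + O(s ^ 2)`, we get `h a / a → 1` and `1 / h s - 1 / s = (s - h s) / (s h s) = O(1)`
as `s → 0⁺`. Integrating, `∫_a^∞ 1 / h = -log a + O(1)`, which is asymptotic to `|log a|`.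
-/

open Filter MeasureTheory Asymptotics Topology Set

section AsymptoticsAtZero

variable {f : ℝ → ℝ}

lemma tendsto_div_self_of_sub_isBigO_sq (hf : (fun s => f s - s) =O[𝓝[>] 0] fun s => s ^ 2) :
    Tendsto (fun s => f s / s) (𝓝[>] 0) (𝓝 1) := by
  have hsmall : (fun s => (f s - s) * s⁻¹) =O[𝓝[>] 0] fun s => s := by
    refine (hf.mul (isBigO_refl (fun s : ℝ => s⁻¹) _)).congr' EventuallyEq.rfl ?_
    filter_upwards [self_mem_nhdsWithin] with s (hs : 0 < s)
    field_simp
  have hzero := hsmall.trans_tendsto (tendsto_nhdsWithin_of_tendsto_nhds tendsto_id)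
  refine (hzero.const_add 1).congr' ?_ |>.trans (by simp)
  filter_upwards [self_mem_nhdsWithin] with s (hs : 0 < s)
  field_simp
  ring

lemma inv_sub_inv_isBigO_one_of_sub_isBigO_sq
    (hf : (fun s => f s - s) =O[𝓝[>] 0] fun s => s ^ 2) :
    (fun s => (f s)⁻¹ - s⁻¹) =O[𝓝[>] 0] fun _ => (1 : ℝ) := by
  have hratio : Tendsto (fun s => s / f s) (𝓝[>] 0) (𝓝 1) := by
    simpa using (tendsto_div_self_of_sub_isBigO_sq hf).inv₀ one_ne_zero
  have hquot : (fun s => (f s - s) * (s ^ 2)⁻¹) =O[𝓝[>] 0] fun _ => (1 : ℝ) := by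
    refine (hf.mul (isBigO_refl (fun s : ℝ => (s ^ 2)⁻¹) _)).congr' EventuallyEq.rfl ?_
    filter_upwards [self_mem_nhdsWithin] with s (hs : 0 < s)
    field_simp
  refine ((hquot.mul (hratio.isBigO_one ℝ)).neg_left).congr' ?_ (by simp)
  filter_upwards [self_mem_nhdsWithin, hratio.eventually_ne one_ne_zero] with s (hs : 0 < s) hfs
  have : f s ≠ 0 := by rintro h; simp [h] at hfs
  field_simp
  ring

end AsymptoticsAtZero

lemma IntegrableOn.of_continuousOn_Icc_of_Ioi {g : ℝ → ℝ} {a b : ℝ}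
    (hc : ContinuousOn g (Icc a b)) (hb : IntegrableOn g (Ioi b)) : IntegrableOn g (Ioi a) :=
  ((hc.integrableOn_Icc.mono_set Ioc_subset_Icc_self).union hb).mono_set fun x (hx : a < x) =>
    (le_or_gt x b).imp (fun hxb => ⟨hx, hxb⟩) id

lemma setIntegral_Ioi_add_log_isBigO_one {g : ℝ → ℝ}
    (hg : ∀ a, 0 < a → IntegrableOn g (Ioi a))
    (hO : (fun s => g s - s⁻¹) =O[𝓝[>] 0] fun _ => (1 : ℝ)) :
    (fun a => (∫ s in Ioi a, g s) + Real.log a) =O[𝓝[>] 0] fun _ => (1 : ℝ) := by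
  obtain ⟨C, hC, hCbound⟩ := hO.exists_pos
  obtain ⟨u, hu, hsub⟩ := mem_nhdsGT_iff_exists_Ioo_subset.mp hCbound.bound
  set b := u / 2
  have hb : 0 < b := half_pos hu
  have hbu : b < u := half_lt_self hu
  -- For `0 < a ≤ b`: `∫_a^∞ g + log a = ∫_a^b (g s - 1 / s) ds + (∫_b^∞ g + log b)`.
  have hinterval : (fun a => ∫ s in a..b, (g s - s⁻¹)) =O[𝓝[>] 0] fun _ => (1 : ℝ) := by
    refine IsBigO.of_bound (C * b) ?_
    filter_upwards [Ioc_mem_nhdsGT hb] with a ha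
    have hab : |b - a| ≤ b := abs_le.mpr ⟨by linarith [ha.2], by linarith [ha.1]⟩
    have hle : ∀ s ∈ uIoc a b, ‖g s - s⁻¹‖ ≤ C := fun s hs => by
      rw [uIoc_of_le ha.2] at hs
      simpa using hsub ⟨ha.1.trans hs.1, hs.2.trans_lt hbu⟩
    calc ‖∫ s in a..b, (g s - s⁻¹)‖ ≤ C * |b - a| :=
          intervalIntegral.norm_integral_le_of_norm_le_const hle
      _ ≤ C * b * ‖(1 : ℝ)‖ := by simpa using mul_le_mul_of_nonneg_left hab hC.le
  refine (hinterval.add (isBigO_const_const ((∫ s in Ioi b, g s) + Real.log b) one_ne_zero _))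
    |>.congr' ?_ EventuallyEq.rfl
  filter_upwards [Ioc_mem_nhdsGT hb] with a ha
  have hpos : ∀ s ∈ uIcc a b, 0 < s := fun s hs => by
    rw [uIcc_of_le ha.2] at hs
    exact ha.1.trans_le hs.1
  have hinv : IntervalIntegrable (fun s : ℝ => s⁻¹) volume a b :=
    intervalIntegral.intervalIntegrable_inv (fun s hs => (hpos s hs).ne') continuousOn_id
  have hgab : IntervalIntegrable g volume a b :=
    (intervalIntegrable_iff_integrableOn_Ioc_of_le ha.2).mpr
      ((hg a ha.1).mono_set Ioc_subset_Ioi_self)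
  rw [intervalIntegral.integral_sub hgab hinv, integral_inv_of_pos ha.1 hb,
    Real.log_div hb.ne' ha.1.ne', ← intervalIntegral.integral_Ioi_sub_Ioi (hg a ha.1) ha.2]
  ring

lemma tendsto_div_neg_of_add_isBigO_one {α : Type*} {l : Filter α} {u L : α → ℝ}
    (hL : Tendsto L l atBot) (hO : (fun x => u x + L x) =O[l] fun _ => (1 : ℝ)) :
    Tendsto (fun x => u x / -L x) l (𝓝 1) := by
  have hsmall : Tendsto (fun x => (u x + L x) * (L x)⁻¹) l (𝓝 0) :=
    (hO.mul (isBigO_refl (fun x => (L x)⁻¹) l)).trans_tendsto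
      (by simpa [Function.comp_def] using tendsto_inv_atBot_zero.comp hL)
  refine (hsmall.const_sub 1).congr' ?_ |>.trans (by simp)
  filter_upwards [hL.eventually_ne_atBot 0] with x hx
  field_simp
  ring

theorem stmt10_general (h : ℝ → ℝ)
    (hcont : ContinuousOn h (Set.Ioi 0))
    (hpos : ∀ s : ℝ, 0 < s → 0 < h s)
    (K δ₀ : ℝ) (hδ₀ : 0 < δ₀)
    (happrox : ∀ s ∈ Set.Ioc (0:ℝ) δ₀, |h s - s| ≤ K * s ^ 2)
    (hint : IntegrableOn (fun s : ℝ => (h s)⁻¹) (Set.Ioi 1)) :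
    Tendsto (fun a : ℝ => (h a ^ 2 * ∫ s in Set.Ioi a, (h s)⁻¹) / (a ^ 2 * |Real.log a|))
      (nhdsWithin 0 (Set.Ioi 0)) (nhds 1) := by
  have hO : (fun s => h s - s) =O[𝓝[>] 0] fun s => s ^ 2 :=
    IsBigO.of_bound K <| by
      filter_upwards [Ioc_mem_nhdsGT hδ₀] with s hs
      simpa [abs_of_nonneg (sq_nonneg s)] using happrox s hs
  have hintegrable : ∀ a, 0 < a → IntegrableOn (fun s => (h s)⁻¹) (Ioi a) := fun a ha =>
    IntegrableOn.of_continuousOn_Icc_of_Ioi (b := 1)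
      ((hcont.mono fun x hx => ha.trans_le hx.1).inv₀ fun x hx => (hpos x (ha.trans_le hx.1)).ne')
      hint
  have hratio := tendsto_div_self_of_sub_isBigO_sq hO
  have hlog := tendsto_div_neg_of_add_isBigO_one Real.tendsto_log_nhdsGT_zero
    (setIntegral_Ioi_add_log_isBigO_one hintegrable (inv_sub_inv_isBigO_one_of_sub_isBigO_sq hO))
  refine ((hratio.pow 2).mul hlog).congr' ?_ |>.trans (by simp)
  filter_upwards [Ioo_mem_nhdsGT one_pos] with a ha
  rw [abs_of_neg (Real.log_neg ha.1 ha.2)]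
  field_simp

theorem stmt10 (h : ℝ → ℝ)
    (hcont : ContinuousOn h (Set.Ioi 0))
    (hpos : ∀ s : ℝ, 0 < s → 0 < h s)
    (hmono : ∀ s t : ℝ, 0 < s → s ≤ t → h s ≤ h t)
    (K δ₀ : ℝ) (hK : 0 < K) (hδ₀ : 0 < δ₀)
    (happrox : ∀ s ∈ Set.Ioc (0:ℝ) δ₀, |h s - s| ≤ K * s ^ 2)
    (hint : IntegrableOn (fun s : ℝ => (h s)⁻¹) (Set.Ioi 1)) :
    Tendsto (fun a : ℝ => (h a ^ 2 * ∫ s in Set.Ioi a, (h s)⁻¹) / (a ^ 2 * |Real.log a|))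
      (nhdsWithin 0 (Set.Ioi 0)) (nhds 1) :=
  stmt10_general h hcont hpos K δ₀ hδ₀ happrox hint
end

section
/- Let 0 < r₁ < r₂ and set d = r₂ − r₁. Define the holomorphic functions L(z) = (r₁ − r₂)·e^z, H(z) = −d·e^{((r₁/r₂) − 1)·z}, and φ(z) = 4i·√(d/r₂)·(r₂/r₁)·(r₂ − r₁)·e^{(r₁/(2r₂))·z} on ℂ. Then for every z ∈ ℂ one has L'(z)·H'(z) = (φ'(z)/2)², where ' denotes the complex derivative. -/
open Complex

/-!
Both sides are constant multiples of `exp ((r₁ / r₂) * z)`: the exponents agree because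
`1 + (r₁ / r₂ - 1) = 2 * (r₁ / (2 * r₂))`, and `√(d / r₂) ^ 2 = d / r₂` makes both constants
equal to `-d ^ 3 / r₂`.
-/

theorem Complex.deriv_const_mul_exp_const_mul (c a z : ℂ) :
    deriv (fun w => c * exp (a * w)) z = c * a * exp (a * z) :=
  (((hasDerivAt_id z).const_mul a).cexp.const_mul c).deriv.trans (by simp [mul_comm, mul_assoc])

theorem stmt12 (r₁ r₂ : ℝ) (hr₁ : 0 < r₁) (hr₁₂ : r₁ < r₂) (z : ℂ) :
    let d : ℝ := r₂ - r₁
    let L : ℂ → ℂ := fun w => ((r₁ : ℂ) - (r₂ : ℂ)) * Complex.exp w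
    let H : ℂ → ℂ := fun w => -(d : ℂ) * Complex.exp ((((r₁ : ℂ) / (r₂ : ℂ)) - 1) * w)
    let φ : ℂ → ℂ := fun w => 4 * Complex.I * (Real.sqrt (d / r₂) : ℂ) *
      ((r₂ : ℂ) / (r₁ : ℂ)) * ((r₂ : ℂ) - (r₁ : ℂ)) *
      Complex.exp (((r₁ : ℂ) / (2 * (r₂ : ℂ))) * w)
    deriv L z * deriv H z = (deriv φ z / 2) ^ 2 := by
  intro d L H φ
  have hr₂ : 0 < r₂ := hr₁.trans hr₁₂
  have hr₁₀ : (r₁ : ℂ) ≠ 0 := by exact_mod_cast hr₁.ne'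
  have hr₂₀ : (r₂ : ℂ) ≠ 0 := by exact_mod_cast hr₂.ne'
  have hsqrt : ((√(d / r₂) : ℝ) : ℂ) ^ 2 = (r₂ - r₁) / r₂ := by
    rw [← ofReal_pow, Real.sq_sqrt (div_nonneg (sub_nonneg.2 hr₁₂.le) hr₂.le)]
    push_cast [d]
    rfl
  have hexp : exp z * exp ((r₁ / r₂ - 1) * z) = exp (r₁ / (2 * r₂) * z) ^ 2 := by
    rw [← exp_add, ← exp_nat_mul]
    congr 1
    field_simp
    ring
  have hhalf : 4 * I * (√(d / r₂) : ℝ) * (r₂ / r₁) * (r₂ - r₁) * (r₁ / (2 * r₂)) / 2 =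
      I * (√(d / r₂) : ℝ) * (r₂ - r₁) := by
    field_simp
    ring
  have hcoeff : ((r₁ : ℂ) - r₂) * (-(d : ℂ) * (r₁ / r₂ - 1)) =
      (I * (√(d / r₂) : ℝ) * (r₂ - r₁)) ^ 2 := by
    rw [mul_pow, mul_pow, I_sq, hsqrt]
    push_cast [d]
    field_simp
    ring
  calc deriv L z * deriv H z
      = ((r₁ : ℂ) - r₂) * (-(d : ℂ) * (r₁ / r₂ - 1)) * (exp z * exp ((r₁ / r₂ - 1) * z)) := by
        simp only [L, H, deriv_const_mul_exp_const_mul, deriv_const_mul_field', Complex.deriv_exp]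
        ring
    _ = (deriv φ z / 2) ^ 2 := by
        simp only [hcoeff, hexp, φ, deriv_const_mul_exp_const_mul, ← hhalf]
        ring
end
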